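/- arXiv:2412.13005 — 4 statements merged into one kernel-verified Lean document; each statement's English description precedes it below -/
import Mathlib

section
/- Let λ > 1 be real and let ℛ_{a,b} be the a×b rectangle polyomino with a,b ∈ ℕ, a ≥ 1, b ≥ 1. Then Per_λ(ℛ_{a,b}) = 2a Σ_{i=1}^{b} ζ(λ,i) + 2b Σ_{i=1}^{a} ζ(λ,i), where ζ(λ,i) = Σ_{r=0}^{∞} 1/(r+i)^λ is the Hurwitz zeta function. -/
/-- The bi-axial fractional interaction between two lattice sites. -/
noncomputable def biAxialWeight (lam : ℝ) (x y : ℤ × ℤ) : ℝ :=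
  if x.1 = y.1 ∧ x.2 ≠ y.2 then 1 / ((|x.2 - y.2| : ℤ) : ℝ) ^ lam
  else if x.2 = y.2 ∧ x.1 ≠ y.1 then 1 / ((|x.1 - y.1| : ℤ) : ℝ) ^ lam
  else 0

/-- The nonlocal bi-axial perimeter of a polyomino, identified with the finite
set of centers of its unit squares. -/
noncomputable def nonlocalPer (lam : ℝ) (P : Finset (ℤ × ℤ)) : ℝ :=
  ∑ x ∈ P, ∑' y : {y : ℤ × ℤ // y ∉ P}, biAxialWeight lam x (y : ℤ × ℤ)

/-- The Hurwitz zeta function ζ(λ, i) = Σ_{r≥0} (r+i)^{-λ} as a real series. -/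
noncomputable def hzeta (lam : ℝ) (i : ℕ) : ℝ := ∑' r : ℕ, 1 / ((r : ℝ) + i) ^ lam

/-- The a×b rectangle polyomino (b columns, a rows). -/
noncomputable def rectP (a b : ℕ) : Finset (ℤ × ℤ) := Finset.Ico (0 : ℤ) b ×ˢ Finset.Ico (0 : ℤ) a

/-!
A site `(p, q)` of the rectangle interacts only with the exterior sites of its column and of its
row. In its column these lie at distances `q + 1, q + 2, …` below and `a - q, a - q + 1, …` above,
contributing `ζ(λ, q + 1) + ζ(λ, a - q)`; summing over `q < a` gives `2 ∑_{i=1}^{a} ζ(λ, i)` for each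
of the `b` columns, and symmetrically for the rows.
-/

open Finset Function

lemma Finset.sum_Ico_zero_natCast {M : Type*} [AddCommMonoid M] (n : ℕ) (f : ℤ → M) :
    ∑ t ∈ Ico (0 : ℤ) n, f t = ∑ k ∈ range n, f k := by
  simp [Int.Ico_eq_finset_map]

lemma Finset.sum_range_sub_add_succ {M : Type*} [AddCommMonoid M] (f : ℕ → M) (n : ℕ) :
    ∑ k ∈ range n, (f (n - k) + f (k + 1)) = 2 • ∑ i ∈ Icc 1 n, f i := by
  have hreflect : ∑ k ∈ range n, f (n - k) = ∑ k ∈ range n, f (k + 1) := by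
    rw [← sum_range_reflect (fun k => f (k + 1))]
    refine sum_congr rfl fun k hk => congrArg f ?_
    have := mem_range.mp hk
    omega
  have hshift : ∑ k ∈ range n, f (k + 1) = ∑ i ∈ Icc 1 n, f i := by
    rw [range_eq_Ico, sum_Ico_add', ← Ico_add_one_right_eq_Icc, zero_add]
  rw [sum_add_distrib, hreflect, hshift, two_nsmul]

lemma hasSum_ite_fst_eq {α β M : Type*} [DecidableEq α] [AddCommMonoid M] [TopologicalSpace M]
    {f : β → M} {m : M} (c : α) (hf : HasSum f m) :
    HasSum (fun y : α × β => if y.1 = c then f y.2 else 0) m := by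
  rw [← (Prod.mk_right_injective c).hasSum_iff]
  · exact hf.congr_fun fun v => if_pos rfl
  · rintro ⟨u, v⟩ huv
    rw [if_neg]
    rintro rfl
    exact huv ⟨v, rfl⟩

lemma hasSum_ite_snd_eq {α β M : Type*} [DecidableEq β] [AddCommMonoid M] [TopologicalSpace M]
    {f : α → M} {m : M} (c : β) (hf : HasSum f m) :
    HasSum (fun y : α × β => if y.2 = c then f y.1 else 0) m := by
  rw [← (Prod.mk_left_injective c).hasSum_iff]
  · exact hf.congr_fun fun u => if_pos rfl
  · rintro ⟨u, v⟩ huv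
    rw [if_neg]
    rintro rfl
    exact huv ⟨u, rfl⟩

lemma hasSum_hzeta {lam : ℝ} (hlam : 1 < lam) (i : ℕ) :
    HasSum (fun r : ℕ => 1 / ((r : ℝ) + i) ^ lam) (hzeta lam i) := by
  refine Summable.hasSum (((Real.summable_one_div_nat_add_rpow i lam).mpr hlam).congr fun r => ?_)
  rw [abs_of_nonneg (by positivity)]

noncomputable def segmentExteriorWeight (lam : ℝ) (a : ℕ) (q t : ℤ) : ℝ :=
  if 0 ≤ t ∧ t < a then 0 else 1 / ((|q - t| : ℤ) : ℝ) ^ lam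

lemma hasSum_segmentExteriorWeight {lam : ℝ} (hlam : 1 < lam) {a q : ℕ} (hq : q < a) :
    HasSum (segmentExteriorWeight lam a q) (hzeta lam (a - q) + hzeta lam (q + 1)) := by
  refine HasSum.of_nat_of_neg_add_one ?_ ?_
  · rw [← (add_left_injective a).hasSum_iff]
    · refine (hasSum_hzeta hlam (a - q)).congr_fun fun n => ?_
      have habs : |(q : ℤ) - (n + a : ℕ)| = (n + (a - q) : ℕ) := by
        rw [abs_of_nonpos (by omega)]
        omega
      simp only [comp_apply, segmentExteriorWeight, habs]
      rw [if_neg (by omega)]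
      push_cast
      rfl
    · rintro n hn
      have hna : n < a := by
        by_contra! h
        exact hn ⟨n - a, Nat.sub_add_cancel h⟩
      rw [segmentExteriorWeight, if_pos (by omega)]
  · refine (hasSum_hzeta hlam (q + 1)).congr_fun fun n => ?_
    have habs : |(q : ℤ) - -(n + 1)| = (n + (q + 1) : ℕ) := by
      rw [abs_of_nonneg (by omega)]
      omega
    rw [segmentExteriorWeight, if_neg (by omega), habs]
    push_cast
    rfl

lemma indicator_compl_rectP_biAxialWeight (lam : ℝ) {a b : ℕ} {x : ℤ × ℤ} (hx : x ∈ rectP a b)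
    (y : ℤ × ℤ) :
    {y | y ∉ rectP a b}.indicator (biAxialWeight lam x) y =
      (if y.1 = x.1 then segmentExteriorWeight lam a x.2 y.2 else 0)
        + (if y.2 = x.2 then segmentExteriorWeight lam b x.1 y.1 else 0) := by
  obtain ⟨p, q⟩ := x
  obtain ⟨u, v⟩ := y
  simp only [rectP, mem_product, mem_Ico] at hx
  simp only [Set.indicator_apply, Set.mem_ofPred_eq, rectP, mem_product, mem_Ico,
    biAxialWeight, segmentExteriorWeight]
  by_cases hu : u = p <;> by_cases hv : v = q
  · simp [hu, hv, hx]
  · subst hu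
    rw [if_pos rfl, if_neg hv, add_zero, ← ite_not]
    exact if_congr (by omega) rfl (if_pos ⟨rfl, Ne.symm hv⟩)
  · subst hv
    rw [if_neg hu, if_pos rfl, zero_add, ← ite_not]
    exact if_congr (by omega) rfl (by rw [if_neg (hu ∘ Eq.symm ∘ And.left), if_pos ⟨rfl, Ne.symm hu⟩])
  · simp [hu, hv, Ne.symm hu, Ne.symm hv]

lemma hasSum_biAxialWeight_compl_rectP {lam : ℝ} (hlam : 1 < lam) {a b p q : ℕ}
    (hp : p < b) (hq : q < a) :
    HasSum (fun y : {y // y ∉ rectP a b} => biAxialWeight lam ((p : ℤ), (q : ℤ)) y)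
      ((hzeta lam (a - q) + hzeta lam (q + 1)) + (hzeta lam (b - p) + hzeta lam (p + 1))) := by
  have hx : ((p : ℤ), (q : ℤ)) ∈ rectP a b := by
    simp only [rectP, mem_product, mem_Ico]
    omega
  have h := (hasSum_ite_fst_eq (p : ℤ) (hasSum_segmentExteriorWeight hlam hq)).add
    (hasSum_ite_snd_eq (q : ℤ) (hasSum_segmentExteriorWeight hlam hp))
  rw [← funext (indicator_compl_rectP_biAxialWeight lam hx), ← hasSum_subtype_iff_indicator] at h
  exact h

theorem stmt_5_general (lam : ℝ) (hlam : 1 < lam) (a b : ℕ) :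
    nonlocalPer lam (rectP a b) =
      2 * a * ∑ i ∈ Finset.Icc 1 b, hzeta lam i
        + 2 * b * ∑ i ∈ Finset.Icc 1 a, hzeta lam i := by
  calc nonlocalPer lam (rectP a b)
      = ∑ p ∈ range b, ∑ q ∈ range a,
          ((hzeta lam (a - q) + hzeta lam (q + 1)) + (hzeta lam (b - p) + hzeta lam (p + 1))) := by
        simp only [nonlocalPer, rectP, sum_product, sum_Ico_zero_natCast]
        exact sum_congr rfl fun p hp => sum_congr rfl fun q hq =>
          (hasSum_biAxialWeight_compl_rectP hlam (mem_range.mp hp) (mem_range.mp hq)).tsum_eq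
    _ = _ := by
        rw [sum_congr rfl fun p _ => sum_add_distrib, sum_add_distrib]
        simp only [sum_const, card_range, nsmul_eq_mul, ← mul_sum,
          sum_range_sub_add_succ (hzeta lam)]
        push_cast
        ring

theorem stmt_5 (lam : ℝ) (hlam : 1 < lam) (a b : ℕ) (ha : 1 ≤ a) (hb : 1 ≤ b) :
    nonlocalPer lam (rectP a b) =
      2 * a * ∑ i ∈ Finset.Icc 1 b, hzeta lam i
        + 2 * b * ∑ i ∈ Finset.Icc 1 a, hzeta lam i :=
  stmt_5_general lam hlam a b
end

section
/- Fix λ > 1.8. The function f(x) = Σ_{j=1}^{x} j^{-(λ-1)} - x·ζ(λ, x+2) is positive for every integer x ≥ 1, and moreover x ↦ f(x) is increasing on the positive integers. -/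
open Finset Real

lemma mvt_step (lam a : ℝ) (hlam : lam > 1.8) (ha : 2 ≤ a) :
    (lam - 1) * (1 / a ^ lam) ≤ (a - 1) ^ (1 - lam) - a ^ (1 - lam) := by
  have h1 : (1:ℝ) ≤ a - 1 := by linarith
  have hcont : ContinuousOn (fun t : ℝ => t ^ (1 - lam)) (Set.Icc (a-1) a) := by
    apply ContinuousOn.rpow_const continuousOn_id
    intro x hx
    exact Or.inl (by simp at hx ⊢; nlinarith [hx.1])
  have hderiv : ∀ x ∈ Set.Ioo (a-1) a, HasDerivAt (fun t : ℝ => t ^ (1 - lam))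
      ((1 - lam) * x ^ (1 - lam - 1)) x := by
    intro x hx
    exact Real.hasDerivAt_rpow_const (Or.inl (by nlinarith [hx.1]))
  obtain ⟨c, hc, hceq⟩ := exists_hasDerivAt_eq_slope (fun t : ℝ => t ^ (1 - lam))
    _ (by linarith : a - 1 < a) hcont hderiv
  have hc0 : 0 < c := by nlinarith [hc.1]
  have hca : c ≤ a := le_of_lt hc.2
  have hmono : a ^ (-lam) ≤ c ^ (-lam) :=
    Real.rpow_le_rpow_of_nonpos hc0 hca (by linarith)
  have ha0 : (0:ℝ) < a := by linarith
  have hsl : (1 - lam) * c ^ (1 - lam - 1) = a ^ (1-lam) - (a-1)^(1-lam) := by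
    rw [hceq]; ring_nf
  have h3 : (a - 1) ^ (1 - lam) - a ^ (1 - lam) = (lam - 1) * c ^ (-lam) := by
    have h2 : (1 : ℝ) - lam - 1 = -lam := by ring
    rw [h2] at hsl
    linarith [hsl]
  rw [h3]
  have hkey : 1 / a ^ lam = a ^ (-lam) := by
    rw [Real.rpow_neg (le_of_lt ha0), one_div]
  rw [hkey]
  exact mul_le_mul_of_nonneg_left hmono (by linarith)

lemma hz_summable (lam : ℝ) (hlam : lam > 1.8) (i : ℕ) :
    Summable (fun r : ℕ => 1 / ((r : ℝ) + i) ^ lam) := by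
  have h : Summable (fun n : ℕ => 1 / (n : ℝ) ^ lam) :=
    Real.summable_one_div_nat_rpow.mpr (by linarith)
  have := (summable_nat_add_iff i).mpr h
  refine this.congr fun n => ?_
  push_cast
  ring_nf

lemma hz_nonneg (lam : ℝ) (i : ℕ) : 0 ≤ hzeta lam i := by
  apply tsum_nonneg
  intro r
  positivity

lemma hz_rec (lam : ℝ) (hlam : lam > 1.8) (i : ℕ) :
    hzeta lam i = 1 / (i : ℝ) ^ lam + hzeta lam (i + 1) := by
  unfold hzeta
  rw [Summable.tsum_eq_zero_add (hz_summable lam hlam i)]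
  congr 1
  · norm_num
  · exact tsum_congr fun n => by push_cast; ring_nf

lemma hz_le (lam : ℝ) (hlam : lam > 1.8) (i : ℕ) (hi : 2 ≤ i) :
    hzeta lam i ≤ ((i : ℝ) - 1) ^ (1 - lam) / (lam - 1) := by
  have hl1 : (0:ℝ) < lam - 1 := by linarith
  set g : ℕ → ℝ := fun r => ((r : ℝ) + i - 1) ^ (1 - lam) with hg
  apply Real.tsum_le_of_sum_range_le (fun n => by positivity)
  intro n
  have hi2 : (2:ℝ) ≤ (i:ℝ) := by exact_mod_cast hi
  have step : ∀ r : ℕ, 1 / ((r : ℝ) + i) ^ lam ≤ (g r - g (r+1)) / (lam - 1) := by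
    intro r
    have ha : (2:ℝ) ≤ (r : ℝ) + i := by
      have : (0:ℝ) ≤ (r:ℝ) := Nat.cast_nonneg r
      linarith
    have := mvt_step lam ((r:ℝ) + i) hlam ha
    rw [le_div_iff₀ hl1]
    have heq : g r - g (r+1) = ((r:ℝ) + i - 1) ^ (1-lam) - ((r:ℝ) + i) ^ (1-lam) := by
      simp only [hg]; push_cast; ring_nf
    rw [heq]
    linarith [this]
  calc ∑ r ∈ range n, 1 / ((r : ℝ) + i) ^ lam
      ≤ ∑ r ∈ range n, (g r - g (r+1)) / (lam - 1) :=
        Finset.sum_le_sum fun r _ => step r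
    _ = (g 0 - g n) / (lam - 1) := by
        rw [← Finset.sum_div, Finset.sum_range_sub']
    _ ≤ g 0 / (lam - 1) := by
        have : 0 ≤ g n := by
          have : (1:ℝ) ≤ (n:ℝ) + i - 1 := by
            have : (0:ℝ) ≤ (n:ℝ) := Nat.cast_nonneg n
            linarith
          positivity
        apply div_le_div_of_nonneg_right (by linarith) hl1.le
    _ = ((i : ℝ) - 1) ^ (1 - lam) / (lam - 1) := by
        simp only [hg]; norm_num

theorem stmt_9 (lam : ℝ) (hlam : lam > 1.8) :
    (∀ x : ℕ, 1 ≤ x →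
      (∑ j ∈ Finset.Icc 1 x, 1 / (j : ℝ) ^ (lam - 1)) - x * hzeta lam (x + 2) > 0) ∧
    (∀ x y : ℕ, 1 ≤ x → x < y →
      (∑ j ∈ Finset.Icc 1 x, 1 / (j : ℝ) ^ (lam - 1)) - x * hzeta lam (x + 2) <
        (∑ j ∈ Finset.Icc 1 y, 1 / (j : ℝ) ^ (lam - 1)) - y * hzeta lam (y + 2)) := by
  have hl1 : (0:ℝ) < lam - 1 := by linarith
  set f : ℕ → ℝ := fun x =>
    (∑ j ∈ Finset.Icc 1 x, 1 / (j : ℝ) ^ (lam - 1)) - x * hzeta lam (x + 2) with hf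
  have key : ∀ x : ℕ, f x < f (x + 1) := by
    intro x
    set S := hzeta lam (x + 3) with hS
    set c : ℝ := 1 / ((x:ℝ) + 2) ^ lam with hc
    have hxc2 : ((x + 2 : ℕ) : ℝ) = (x:ℝ) + 2 := by push_cast; ring
    have hrec : hzeta lam (x + 2) = c + S := by
      have h := hz_rec lam hlam (x + 2)
      rw [hxc2] at h
      exact h
    have hsum : ∑ j ∈ Finset.Icc 1 (x+1), 1 / (j : ℝ) ^ (lam - 1)
        = (∑ j ∈ Finset.Icc 1 x, 1 / (j : ℝ) ^ (lam - 1)) + 1 / ((x:ℝ)+1) ^ (lam-1) := by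
      rw [Finset.sum_Icc_succ_top (by omega : 1 ≤ x + 1)]
      congr 1
      push_cast
      ring_nf
    set A : ℝ := ((x:ℝ) + 1) ^ (1 - lam) with hA
    have hApow : 1 / ((x:ℝ)+1) ^ (lam-1) = A := by
      rw [hA, show (1 - lam) = -(lam - 1) by ring,
        Real.rpow_neg (by positivity), one_div]
    have hdiff : f (x+1) - f x = A + (x:ℝ) * c - S := by
      simp only [hf]
      rw [hsum, hApow, hrec]
      have h1 : hzeta lam (x + 1 + 2) = S := hS.symm
      rw [h1]
      push_cast; ring
    -- bounds
    have hb1 : hzeta lam (x + 2) ≤ ((x:ℝ)+1) ^ (1-lam) / (lam - 1) := by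
      have := hz_le lam hlam (x+2) (by omega)
      rwa [hxc2, show (x:ℝ) + 2 - 1 = (x:ℝ) + 1 by ring] at this
    have hb2 : S ≤ ((x:ℝ)+2) ^ (1-lam) / (lam - 1) := by
      have := hz_le lam hlam (x+3) (by omega)
      have h3 : ((x + 3 : ℕ) : ℝ) = (x:ℝ) + 3 := by push_cast; ring
      rw [h3, show (x:ℝ) + 3 - 1 = (x:ℝ) + 2 by ring] at this
      exact this
    have hceq : ((x:ℝ)+2) ^ (1-lam) = ((x:ℝ)+2) * c := by
      rw [hc, show (1 - lam) = 1 + (-lam) by ring,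
        Real.rpow_add (by positivity), Real.rpow_one,
        Real.rpow_neg (by positivity), one_div]
    have e1 : (lam - 1) * (c + S) ≤ A := by
      rw [← hrec, hA]
      rw [mul_comm, ← le_div_iff₀ hl1]
      exact hb1
    have e2 : (lam - 1) * S ≤ ((x:ℝ)+2) * c := by
      rw [← hceq, mul_comm, ← le_div_iff₀ hl1]
      exact hb2
    have hcpos : 0 < c := by rw [hc]; positivity
    have hSpos : 0 ≤ S := hz_nonneg lam (x+3)
    have hx0 : (0:ℝ) ≤ (x:ℝ) := Nat.cast_nonneg x
    have hT : 0 < A + (x:ℝ) * c - S := by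
      rcases le_or_gt 2 lam with h2 | h2
      · have : c + S ≤ (lam - 1) * (c + S) := by nlinarith
        nlinarith [mul_nonneg hx0 hcpos.le]
      · have e1' : (lam-1) * ((lam - 1) * (c + S)) ≤ (lam-1) * A :=
          mul_le_mul_of_nonneg_left e1 hl1.le
        have e2' : (2 - lam) * ((lam - 1) * S) ≤ (2 - lam) * (((x:ℝ)+2) * c) :=
          mul_le_mul_of_nonneg_left e2 (by linarith)
        have e3 : 0 ≤ (x:ℝ) * c * (2 * lam - 3) := by
          apply mul_nonneg (mul_nonneg hx0 hcpos.le); linarith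
        have e4 : 0 < c * (lam^2 - 3) := by
          apply mul_pos hcpos; nlinarith
        nlinarith [e1', e2', e3, e4, mul_pos hl1 hcpos]
    linarith [hdiff, hT]
  have hmono : StrictMono f := strictMono_nat_of_lt_succ key
  have hf0 : f 0 = 0 := by simp [hf]
  constructor
  · intro x hx
    have := hmono (show 0 < x from hx)
    rw [hf0] at this
    exact this
  · intro x y _ hxy
    exact hmono hxy
end

section
/- Fix λ > 1.8. Define f(x) = x² Σ_{r=1}^{x²+x} r^{-λ} − x² Σ_{r=1}^{(x+1)²} ((x+1)²+1−r)·r^{-λ} − (x+1)² Σ_{r=1}^{x²−1} (x²−r)·r^{-λ} + 2(x²+x) Σ_{r=1}^{x²+x−1} (x²+x−r)·r^{-λ} − x² Σ_{r=x²+x+1}^{x²+2x+2} r^{-λ}. Then f(x) > 0 for every integer x ≥ 2. -/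
/-!
Write `N = x²`. Regrouping the five sums term by term, the left-hand side becomes
`∑_{1 ≤ r ≤ N + 2x + 2} c_r r^{-λ}` with `c_r = coeff x r`, where `c_r = r` for `r < N` and
`c_r ≤ 0` for `r > N`. As `r ↦ r^{9/5 - λ}` is decreasing, the sum is at least `N^{9/5 - λ}` times
its value at `λ = 9/5`, so it suffices to treat `λ = 9/5`. There the terms with `r < N` give
`∑ r^{-4/5} ≥ 5 (N^{1/5} - 1)` by comparison with an integral, while the terms with `r ≥ N` are at
least `N^{-9/5} ∑_{r ≥ N} c_r = -N^{-4/5} (N + 3x + 3)`; this wins for `x ≥ 4`. The cases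
`x = 2, 3` are checked numerically using `1 ≤ r^{1/5} ≤ B` whenever `r ≤ B⁵`.
-/

open Finset

theorem mul_rpow_sub_rpow_nonneg {c r N a : ℝ} (hr : 0 < r) (hN : 0 < N) (ha : a ≤ 0)
    (hc : 0 ≤ c * (N - r)) : 0 ≤ c * (r ^ a - N ^ a) := by
  rcases lt_trichotomy r N with h | rfl | h
  · have : N ^ a ≤ r ^ a := Real.rpow_le_rpow_of_nonpos hr h.le ha
    exact mul_nonneg (nonneg_of_mul_nonneg_left hc (by linarith)) (by linarith)
  · simp
  · have : r ^ a ≤ N ^ a := Real.rpow_le_rpow_of_nonpos hN h.le ha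
    exact mul_nonneg_of_nonpos_of_nonpos (nonpos_of_mul_nonneg_left hc (by linarith)) (by linarith)

theorem rpow_sub_mul_sum_le_sum_div_rpow {s : Finset ℕ} {c : ℕ → ℝ} {N μ l : ℝ} (hμl : μ ≤ l)
    (hN : 0 < N) (hs : ∀ r ∈ s, 0 < r) (hc : ∀ r ∈ s, 0 ≤ c r * (N - r)) :
    N ^ (μ - l) * ∑ r ∈ s, c r / (r : ℝ) ^ μ ≤ ∑ r ∈ s, c r / (r : ℝ) ^ l := by
  rw [mul_sum]
  refine sum_le_sum fun r hr => ?_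
  have hr0 : (0 : ℝ) < r := by exact_mod_cast hs r hr
  have key := mul_rpow_sub_rpow_nonneg hr0 hN (sub_nonpos.2 hμl) (hc r hr)
  have hrl : c r / (r : ℝ) ^ l = c r * (r : ℝ) ^ (μ - l) / (r : ℝ) ^ μ := by
    rw [Real.rpow_sub hr0]
    field_simp
  rw [hrl, mul_div_assoc', div_le_div_iff_of_pos_right (by positivity)]
  linarith

theorem div_le_sum_Ico_rpow_neg {a : ℝ} (ha0 : 0 ≤ a) (ha1 : a < 1) {n : ℕ} (hn : 1 ≤ n) :
    ((n : ℝ) ^ (1 - a) - 1) / (1 - a) ≤ ∑ r ∈ Ico 1 n, (r : ℝ) ^ (-a) := by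
  have hcast : (1 : ℝ) + ((n - 1 : ℕ) : ℝ) = n := by push_cast [Nat.cast_sub hn]; ring
  have hanti : AntitoneOn (fun t : ℝ => t ^ (-a)) (Set.Icc 1 (1 + ((n - 1 : ℕ) : ℝ))) :=
    (Real.antitoneOn_rpow_Ioi_of_exponent_nonpos (by linarith)).mono
      fun t ht => lt_of_lt_of_le one_pos ht.1
  have h := hanti.integral_le_sum
  rw [integral_rpow (Or.inl (by linarith)), hcast, Real.one_rpow, neg_add_eq_sub] at h
  rw [sum_Ico_eq_sum_range]
  simpa only [Nat.cast_add, Nat.cast_one] using h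

theorem mul_ite_div_sq_le_div_rpow {c r B : ℝ} (hr : 1 ≤ r) (hB : r ≤ B ^ 5) :
    c * (if 0 ≤ c then 1 else B) / r ^ 2 ≤ c / r ^ (9 / 5 : ℝ) := by
  have hr0 : 0 < r := by linarith
  have hroot : (r ^ (1 / 5 : ℝ)) ^ 5 = r := by
    rw [← Real.rpow_natCast, ← Real.rpow_mul hr0.le]; norm_num
  have h1 : 1 ≤ r ^ (1 / 5 : ℝ) := Real.one_le_rpow hr (by norm_num)
  have hB' : r ^ (1 / 5 : ℝ) ≤ B := (Odd.pow_le_pow (by decide)).1 (hroot ▸ hB)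
  have hdiv : c / r ^ (9 / 5 : ℝ) = c * r ^ (1 / 5 : ℝ) / r ^ 2 := by
    rw [show (9 / 5 : ℝ) = 2 - 1 / 5 by norm_num, Real.rpow_sub hr0, Real.rpow_two]
    field_simp
  rw [hdiv, div_le_div_iff_of_pos_right (by positivity)]
  split_ifs <;> nlinarith

theorem sum_range_add_mul (n : ℕ) (a b : ℝ) :
    ∑ k ∈ range n, (a + b * k) = n * a + b * (n * (n - 1) / 2) := by
  induction n with
  | zero => simp
  | succ n ih => rw [sum_range_succ, ih]; push_cast; ring

namespace SquareProtuberance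

def coeff (x r : ℕ) : ℝ :=
  if r < x ^ 2 then r
  else if r ≤ x ^ 2 + x then (x : ℝ) ^ 2 - x * (x + 2) * (r - x ^ 2)
  else -(x : ℝ) ^ 2 * (x ^ 2 + 2 * x + 3 - r)

theorem lhs_eq_sum_coeff_div_rpow (lam : ℝ) {x : ℕ} (hx : 1 ≤ x) :
    (x : ℝ) ^ 2 * (∑ r ∈ Finset.Icc (1 : ℕ) (x ^ 2 + x), 1 / (r : ℝ) ^ lam)
      - (x : ℝ) ^ 2 * (∑ r ∈ Finset.Icc (1 : ℕ) ((x + 1) ^ 2),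
          (((x : ℝ) + 1) ^ 2 + 1 - (r : ℝ)) / (r : ℝ) ^ lam)
      - ((x : ℝ) + 1) ^ 2 * (∑ r ∈ Finset.Icc (1 : ℕ) (x ^ 2 - 1),
          ((x : ℝ) ^ 2 - (r : ℝ)) / (r : ℝ) ^ lam)
      + 2 * ((x : ℝ) ^ 2 + x) * (∑ r ∈ Finset.Icc (1 : ℕ) (x ^ 2 + x - 1),
          ((x : ℝ) ^ 2 + (x : ℝ) - (r : ℝ)) / (r : ℝ) ^ lam)
      - (x : ℝ) ^ 2 * (∑ r ∈ Finset.Icc (x ^ 2 + x + 1 : ℕ) (x ^ 2 + 2 * x + 2),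
          1 / (r : ℝ) ^ lam)
      = ∑ r ∈ Icc 1 (x ^ 2 + 2 * x + 2), coeff x r / (r : ℝ) ^ lam := by
  have hsub : ∀ a b, 1 ≤ a → b ≤ x ^ 2 + 2 * x + 2 → Icc a b ⊆ Icc 1 (x ^ 2 + 2 * x + 2) :=
    fun _ _ ha hb => Icc_subset_Icc ha hb
  rw [← sum_indicator_subset _ (hsub (x ^ 2 + x + 1) _ (by omega) le_rfl),
    ← sum_indicator_subset _ (hsub 1 (x ^ 2 + x) le_rfl (by omega)),
    ← sum_indicator_subset _ (hsub 1 ((x + 1) ^ 2) le_rfl (by ring_nf; omega)),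
    ← sum_indicator_subset _ (hsub 1 (x ^ 2 - 1) le_rfl (by omega)),
    ← sum_indicator_subset _ (hsub 1 (x ^ 2 + x - 1) le_rfl (by omega)),
    mul_sum, mul_sum, mul_sum, mul_sum, mul_sum,
    ← sum_sub_distrib, ← sum_sub_distrib, ← sum_add_distrib, ← sum_sub_distrib]
  refine sum_congr rfl fun r hr => ?_
  have hx2 : x ≤ x ^ 2 := by nlinarith
  have hsq : (x + 1) ^ 2 = x ^ 2 + 2 * x + 1 := by ring
  simp only [Set.indicator_apply, mem_coe, mem_Icc, hsq] at hr ⊢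
  unfold coeff
  -- otherwise `omega` treats `x ^ 2 - 1` and `x ^ 2 + x - 1` as unrelated atoms
  generalize hN : x ^ 2 = N at hx2 hr ⊢
  have hNR : (N : ℝ) = (x : ℝ) ^ 2 := by rw [← hN]; push_cast; rfl
  obtain h | h | rfl | h | rfl : r < N ∨ N ≤ r ∧ r < N + x ∨ r = N + x ∨
      N + x < r ∧ r < N + 2 * x + 2 ∨ r = N + 2 * x + 2 := by omega
  all_goals split_ifs <;> first | omega | (push_cast [hNR]; ring1)

theorem coeff_mul_sub_nonneg (x : ℕ) {r : ℕ} (hr : r ≤ x ^ 2 + 2 * x + 2) :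
    0 ≤ coeff x r * ((x : ℝ) ^ 2 - r) := by
  have hrR : (r : ℝ) ≤ (x : ℝ) ^ 2 + 2 * x + 2 := by exact_mod_cast hr
  have hx : (0 : ℝ) ≤ x := x.cast_nonneg
  unfold coeff
  split_ifs with hlt hle
  · have : (r : ℝ) < (x : ℝ) ^ 2 := by exact_mod_cast hlt
    exact mul_nonneg r.cast_nonneg (by linarith)
  · obtain heq | hgt : r = x ^ 2 ∨ x ^ 2 + 1 ≤ r := by omega
    · subst heq; push_cast; simp
    · have : (x : ℝ) ^ 2 + 1 ≤ r := by exact_mod_cast hgt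
      nlinarith [mul_nonneg hx (sub_nonneg.2 this)]
  · have : (x : ℝ) ^ 2 + x < r := by exact_mod_cast not_le.1 hle
    have h1 : 0 ≤ (x : ℝ) ^ 2 + 2 * x + 3 - r := by linarith
    have h2 : 0 ≤ (r : ℝ) - x ^ 2 := by linarith
    nlinarith [mul_nonneg (mul_nonneg (sq_nonneg (x : ℝ)) h1) h2]

theorem sum_Icc_sq_coeff (x : ℕ) :
    ∑ r ∈ Icc (x ^ 2) (x ^ 2 + 2 * x + 2), coeff x r = -((x : ℝ) ^ 2 * (x ^ 2 + 3 * x + 3)) := by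
  rw [← Ico_add_one_right_eq_Icc,
    ← sum_Ico_consecutive _ (n := x ^ 2 + x + 1) (by omega) (by omega),
    sum_Ico_eq_sum_range, sum_Ico_eq_sum_range]
  have h1 : ∀ k ∈ range (x ^ 2 + x + 1 - x ^ 2),
      coeff x (x ^ 2 + k) = (x : ℝ) ^ 2 + -(x * (x + 2)) * k := by
    intro k hk
    rw [mem_range] at hk
    rw [coeff, if_neg (by omega), if_pos (by omega)]
    push_cast; ring
  have h2 : ∀ k ∈ range (x ^ 2 + 2 * x + 2 + 1 - (x ^ 2 + x + 1)),
      coeff x (x ^ 2 + x + 1 + k) = -((x : ℝ) ^ 2 * (x + 2)) + (x : ℝ) ^ 2 * k := by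
    intro k hk
    rw [coeff, if_neg (by omega), if_neg (by omega)]
    push_cast; ring
  rw [sum_congr rfl h1, sum_congr rfl h2, sum_range_add_mul, sum_range_add_mul,
    show x ^ 2 + x + 1 - x ^ 2 = x + 1 by omega,
    show x ^ 2 + 2 * x + 2 + 1 - (x ^ 2 + x + 1) = x + 2 by omega]
  push_cast; ring

theorem sum_Ico_coeff_div_rpow_ge {x : ℕ} (hx : 1 ≤ x) :
    5 * (((x : ℝ) ^ 2) ^ (1 / 5 : ℝ) - 1) ≤
      ∑ r ∈ Ico 1 (x ^ 2), coeff x r / (r : ℝ) ^ (9 / 5 : ℝ) := by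
  have h := div_le_sum_Ico_rpow_neg (a := 4 / 5) (by norm_num) (by norm_num)
    (n := x ^ 2) (by nlinarith)
  rw [show (1 : ℝ) - 4 / 5 = 1 / 5 by norm_num, Nat.cast_pow] at h
  convert h using 1
  · ring
  refine sum_congr rfl fun r hr => ?_
  have hr0 : (0 : ℝ) < r := by exact_mod_cast (mem_Ico.1 hr).1
  rw [coeff, if_pos (mem_Ico.1 hr).2, show -(4 / 5 : ℝ) = 1 - 9 / 5 by norm_num,
    Real.rpow_sub hr0, Real.rpow_one]

theorem sum_Icc_sq_coeff_div_rpow_ge {x : ℕ} (hx : 1 ≤ x) :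
    -(((x : ℝ) ^ 2) ^ (1 / 5 : ℝ) * (x ^ 2 + 3 * x + 3) / x ^ 2) ≤
      ∑ r ∈ Icc (x ^ 2) (x ^ 2 + 2 * x + 2), coeff x r / (r : ℝ) ^ (9 / 5 : ℝ) := by
  have hN : (0 : ℝ) < (x : ℝ) ^ 2 := by positivity
  have h := rpow_sub_mul_sum_le_sum_div_rpow (μ := 0) (l := 9 / 5) (by norm_num) hN
    (s := Icc (x ^ 2) (x ^ 2 + 2 * x + 2)) (c := coeff x)
    (fun r hr => lt_of_lt_of_le (by positivity) (mem_Icc.1 hr).1)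
    (fun r hr => coeff_mul_sub_nonneg x (mem_Icc.1 hr).2)
  simp only [Real.rpow_zero, div_one, zero_sub, sum_Icc_sq_coeff] at h
  have hpow : ((x : ℝ) ^ 2) ^ (-(9 / 5) : ℝ) = ((x : ℝ) ^ 2) ^ (1 / 5 : ℝ) / ((x : ℝ) ^ 2) ^ 2 := by
    rw [show (-(9 / 5) : ℝ) = 1 / 5 - 2 by norm_num, Real.rpow_sub hN, Real.rpow_two]
  rw [hpow] at h
  convert h using 2
  field_simp

theorem mul_div_sq_lt_five_mul_sub_one {t x : ℝ} (hx : 4 ≤ x) (ht : t ^ 5 = x ^ 2) :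
    t * (x ^ 2 + 3 * x + 3) / x ^ 2 < 5 * (t - 1) := by
  have ht_ge : (1.74 : ℝ) ≤ t := (Odd.pow_le_pow (n := 5) (by decide)).1 (by rw [ht]; nlinarith)
  rw [div_lt_iff₀ (by positivity)]
  have h4 : 0 ≤ 4 * x ^ 2 - 3 * x - 3 := by nlinarith
  nlinarith [mul_nonneg (sub_nonneg.2 ht_ge) h4,
    mul_nonneg (sub_nonneg.2 hx) (by positivity : (0 : ℝ) ≤ x)]

theorem sum_coeff_div_rpow_pos_of_four_le {x : ℕ} (hx : 4 ≤ x) :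
    0 < ∑ r ∈ Icc 1 (x ^ 2 + 2 * x + 2), coeff x r / (r : ℝ) ^ (9 / 5 : ℝ) := by
  rw [← Ico_add_one_right_eq_Icc,
    ← sum_Ico_consecutive _ (n := x ^ 2) (by nlinarith) (by omega), Ico_add_one_right_eq_Icc]
  have hroot : (((x : ℝ) ^ 2) ^ (1 / 5 : ℝ)) ^ 5 = (x : ℝ) ^ 2 := by
    rw [← Real.rpow_natCast, ← Real.rpow_mul (by positivity)]; norm_num
  have := mul_div_sq_lt_five_mul_sub_one (by exact_mod_cast hx) hroot
  linarith [sum_Ico_coeff_div_rpow_ge (x := x) (by omega),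
    sum_Icc_sq_coeff_div_rpow_ge (x := x) (by omega)]

theorem sum_coeff_div_rpow_pos {x : ℕ} (hx : 2 ≤ x) :
    0 < ∑ r ∈ Icc 1 (x ^ 2 + 2 * x + 2), coeff x r / (r : ℝ) ^ (9 / 5 : ℝ) := by
  have hcrude : ∀ B : ℝ, ((x ^ 2 + 2 * x + 2 : ℕ) : ℝ) ≤ B ^ 5 →
      ∑ r ∈ Icc 1 (x ^ 2 + 2 * x + 2), coeff x r * (if 0 ≤ coeff x r then 1 else B) / (r : ℝ) ^ 2
        ≤ ∑ r ∈ Icc 1 (x ^ 2 + 2 * x + 2), coeff x r / (r : ℝ) ^ (9 / 5 : ℝ) :=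
    fun B hB => sum_le_sum fun r hr => mul_ite_div_sq_le_div_rpow
      (by exact_mod_cast (mem_Icc.1 hr).1) ((Nat.cast_le.2 (mem_Icc.1 hr).2).trans hB)
  obtain rfl | rfl | hx4 : x = 2 ∨ x = 3 ∨ 4 ≤ x := by omega
  · refine lt_of_lt_of_le ?_ (hcrude (8 / 5) (by norm_num))
    rw [← Ico_add_one_right_eq_Icc, sum_Ico_eq_sum_range]
    norm_num [sum_range_succ, coeff]
  · refine lt_of_lt_of_le ?_ (hcrude (9 / 5) (by norm_num))
    rw [← Ico_add_one_right_eq_Icc, sum_Ico_eq_sum_range]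
    norm_num [sum_range_succ, coeff]
  · exact sum_coeff_div_rpow_pos_of_four_le hx4

end SquareProtuberance

theorem stmt_13 (lam : ℝ) (hlam : lam > 1.8) (x : ℕ) (hx : 2 ≤ x) :
    (x : ℝ) ^ 2 * (∑ r ∈ Finset.Icc (1 : ℕ) (x ^ 2 + x), 1 / (r : ℝ) ^ lam)
      - (x : ℝ) ^ 2 * (∑ r ∈ Finset.Icc (1 : ℕ) ((x + 1) ^ 2),
          (((x : ℝ) + 1) ^ 2 + 1 - (r : ℝ)) / (r : ℝ) ^ lam)
      - ((x : ℝ) + 1) ^ 2 * (∑ r ∈ Finset.Icc (1 : ℕ) (x ^ 2 - 1),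
          ((x : ℝ) ^ 2 - (r : ℝ)) / (r : ℝ) ^ lam)
      + 2 * ((x : ℝ) ^ 2 + x) * (∑ r ∈ Finset.Icc (1 : ℕ) (x ^ 2 + x - 1),
          ((x : ℝ) ^ 2 + (x : ℝ) - (r : ℝ)) / (r : ℝ) ^ lam)
      - (x : ℝ) ^ 2 * (∑ r ∈ Finset.Icc (x ^ 2 + x + 1 : ℕ) (x ^ 2 + 2 * x + 2),
          1 / (r : ℝ) ^ lam) > 0 := by
  rw [gt_iff_lt, SquareProtuberance.lhs_eq_sum_coeff_div_rpow lam (by omega)]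
  have hN : (0 : ℝ) < (x : ℝ) ^ 2 := by positivity
  have hcompare := rpow_sub_mul_sum_le_sum_div_rpow (μ := 9 / 5) (l := lam)
    (by norm_num at hlam; linarith) hN (fun r hr => (mem_Icc.1 hr).1)
    (fun r hr => SquareProtuberance.coeff_mul_sub_nonneg x (mem_Icc.1 hr).2)
  exact (mul_pos (Real.rpow_pos_of_pos hN _)
    (SquareProtuberance.sum_coeff_div_rpow_pos hx)).trans_le hcompare
end

section
/- Fix λ > 1. For integers l ≥ 2 and k with 1 ≤ k ≤ l−1, the difference of nonlocal perimeters Per_λ(𝒬_l^k) − Per_λ(𝒬_l) equals 2k·ζ(λ, l+1) + 2 Σ_{i=1}^{k} ζ(λ,i), where 𝒬_l is the l×l square polyomino and 𝒬_l^k is the l×l square with a k-protuberance (a 1×k strip) attached along one side. -/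
/-- The l×l square polyomino. -/
noncomputable def squareP (l : ℕ) : Finset (ℤ × ℤ) := Finset.Ico (0 : ℤ) l ×ˢ Finset.Ico (0 : ℤ) l

/-- The l×l square polyomino with a k-protuberance (a 1×k strip of unit squares)
attached along one of its sides. -/
noncomputable def squareProtP (l k : ℕ) : Finset (ℤ × ℤ) :=
  squareP l ∪ Finset.Ico (0 : ℤ) k ×ˢ ({(l : ℤ)} : Finset ℤ)

/-!
A lattice site interacts with the whole lattice with total weight `4 ζ(λ,1)` (two axes, two
directions each), so `Per_λ(Q) = ∑_{x ∈ Q} (4 ζ(λ,1) - ∑_{y ∈ Q} w(x,y))`. Attaching a set `S` to a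
disjoint `P` thus adds `∑_{x ∈ S} (4 ζ(λ,1) - 2 ∑_{y ∈ P} w(x,y) - ∑_{y ∈ S} w(x,y))`, using the
symmetry of `w` for the cross term. A protuberance site `(j, l)` sees the square only along its
column, at distances `1, …, l`, and the rest of the protuberance along its row, at distances
`1, …, j` and `1, …, k - 1 - j`; each such truncated series is `ζ(λ,1) - ζ(λ,n+1)`.
-/

open Finset

lemma sum_Ico_zero_intCast {M : Type*} [AddCommMonoid M] (f : ℤ → M) (n : ℕ) :
    ∑ q ∈ Ico (0 : ℤ) n, f q = ∑ i ∈ range n, f i := by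
  simp [Int.Ico_eq_finset_map]

lemma sum_range_add_one_eq_sum_Icc {M : Type*} [AddCommMonoid M] (f : ℕ → M) (k : ℕ) :
    ∑ j ∈ range k, f (j + 1) = ∑ i ∈ Icc 1 k, f i := by
  rw [range_eq_Ico, sum_Ico_add' f 0 k 1, zero_add, Ico_add_one_right_eq_Icc]

lemma sum_range_sub_eq_sum_Icc {M : Type*} [AddCommMonoid M] (f : ℕ → M) (k : ℕ) :
    ∑ j ∈ range k, f (k - j) = ∑ i ∈ Icc 1 k, f i := by
  rw [← sum_range_add_one_eq_sum_Icc, ← sum_range_reflect]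
  exact sum_congr rfl fun j hj => by have := mem_range.mp hj; congr 1; omega

/-- At `d = 0` this is the junk value `1 / 0 = 0` (for `lam ≠ 0`), which is what lets
`biAxialWeight` split into its two axes. -/
noncomputable def axialKernel (lam : ℝ) (d : ℤ) : ℝ := 1 / ((|d| : ℤ) : ℝ) ^ lam

section

variable {lam : ℝ}

lemma axialKernel_zero (hlam : lam ≠ 0) : axialKernel lam 0 = 0 := by
  simp [axialKernel, Real.zero_rpow hlam]

lemma axialKernel_neg (d : ℤ) : axialKernel lam (-d) = axialKernel lam d := by
  simp [axialKernel]

lemma axialKernel_natCast (n : ℕ) : axialKernel lam n = 1 / (n : ℝ) ^ lam := by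
  simp [axialKernel]

lemma biAxialWeight_comm (x y : ℤ × ℤ) : biAxialWeight lam x y = biAxialWeight lam y x := by
  simp only [biAxialWeight, eq_comm (a := x.1), eq_comm (a := x.2), ne_comm (a := x.1),
    ne_comm (a := x.2), abs_sub_comm x.1, abs_sub_comm x.2]

lemma biAxialWeight_eq (hlam : lam ≠ 0) (x y : ℤ × ℤ) :
    biAxialWeight lam x y =
      (if y.1 = x.1 then axialKernel lam (y.2 - x.2) else 0) +
        (if y.2 = x.2 then axialKernel lam (y.1 - x.1) else 0) := by
  by_cases h₁ : y.1 = x.1 <;> by_cases h₂ : y.2 = x.2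
  · simp [biAxialWeight, h₁, h₂, axialKernel_zero hlam]
  · simp [biAxialWeight, axialKernel, h₁, h₂, Ne.symm h₂, abs_sub_comm x.2]
  · simp [biAxialWeight, axialKernel, h₁, h₂, Ne.symm h₁, abs_sub_comm x.1]
  · simp [biAxialWeight, h₁, h₂, Ne.symm h₁, Ne.symm h₂]

lemma summable_hzeta (hlam : 1 < lam) (a : ℕ) :
    Summable fun r : ℕ => 1 / ((r : ℝ) + a) ^ lam := by
  simpa using (summable_nat_add_iff a).mpr (Real.summable_one_div_nat_rpow.mpr hlam)

lemma hzeta_eq_sum_range_add (hlam : 1 < lam) (a n : ℕ) :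
    hzeta lam a = ∑ i ∈ range n, 1 / ((i : ℝ) + a) ^ lam + hzeta lam (a + n) := by
  rw [hzeta, hzeta, ← (summable_hzeta hlam a).sum_add_tsum_nat_add n]
  congr 2 with i
  push_cast
  ring_nf

lemma hasSum_axialKernel (hlam : 1 < lam) : HasSum (axialKernel lam) (2 * hzeta lam 1) := by
  have h : HasSum (fun n : ℕ => 1 / ((n : ℝ) + 1) ^ lam) (hzeta lam 1) := by
    simpa [hzeta] using (summable_hzeta hlam 1).hasSum
  convert HasSum.of_add_one_of_neg_add_one (f := axialKernel lam) ?_ ?_ using 1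
  · rw [axialKernel_zero (by linarith)]; ring
  · convert h using 2 with n
    exact_mod_cast axialKernel_natCast (n + 1)
  · convert h using 2 with n
    rw [axialKernel_neg]
    exact_mod_cast axialKernel_natCast (n + 1)

lemma hasSum_axialKernel_column (hlam : 1 < lam) (x : ℤ × ℤ) :
    HasSum (fun y : ℤ × ℤ => if y.1 = x.1 then axialKernel lam (y.2 - x.2) else 0)
      (2 * hzeta lam 1) := by
  have hinj : Function.Injective fun m : ℤ => (x.1, m) := fun a b h => (Prod.mk.inj h).2
  refine (hinj.hasSum_iff fun y hy => if_neg fun h => hy ⟨y.2, by simp [← h]⟩).mp ?_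
  simpa [Function.comp_def] using (Equiv.subRight x.2).hasSum_iff.mpr (hasSum_axialKernel hlam)

lemma hasSum_biAxialWeight (hlam : 1 < lam) (x : ℤ × ℤ) :
    HasSum (biAxialWeight lam x) (4 * hzeta lam 1) := by
  have hrow : HasSum (fun y : ℤ × ℤ => if y.2 = x.2 then axialKernel lam (y.1 - x.1) else 0)
      (2 * hzeta lam 1) :=
    (Equiv.prodComm ℤ ℤ).hasSum_iff.mp (hasSum_axialKernel_column hlam x.swap)
  rw [funext (biAxialWeight_eq (by linarith) x), show (4 : ℝ) = 2 + 2 by norm_num, add_mul]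
  exact (hasSum_axialKernel_column hlam x).add hrow

lemma nonlocalPer_eq (hlam : 1 < lam) (Q : Finset (ℤ × ℤ)) :
    nonlocalPer lam Q = ∑ x ∈ Q, (4 * hzeta lam 1 - ∑ y ∈ Q, biAxialWeight lam x y) :=
  sum_congr rfl fun x _ =>
    (Q.hasSum_compl_iff.mpr (by simpa using hasSum_biAxialWeight hlam x)).tsum_eq

lemma nonlocalPer_union_sub (hlam : 1 < lam) {P S : Finset (ℤ × ℤ)} (hPS : Disjoint P S) :
    nonlocalPer lam (P ∪ S) - nonlocalPer lam P =
      ∑ x ∈ S, (4 * hzeta lam 1 - 2 * ∑ y ∈ P, biAxialWeight lam x y -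
        ∑ y ∈ S, biAxialWeight lam x y) := by
  have hcross : ∑ x ∈ P, ∑ y ∈ S, biAxialWeight lam x y =
      ∑ x ∈ S, ∑ y ∈ P, biAxialWeight lam x y := by
    rw [sum_comm]
    exact sum_congr rfl fun y _ => sum_congr rfl fun x _ => biAxialWeight_comm x y
  simp only [nonlocalPer_eq hlam, sum_union hPS, sum_sub_distrib, sum_add_distrib, ← mul_sum]
  linarith

lemma sum_range_axialKernel_sub_self (hlam : 1 < lam) (n : ℕ) :
    ∑ i ∈ range n, axialKernel lam (i - n) = hzeta lam 1 - hzeta lam (n + 1) := by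
  rw [hzeta_eq_sum_range_add hlam 1 n, add_comm 1 n, add_sub_cancel_right, ← sum_range_reflect]
  refine sum_congr rfl fun i hi => ?_
  have hi : i < n := mem_range.mp hi
  rw [show ((n - 1 - i : ℕ) : ℤ) - n = -((i + 1 : ℕ) : ℤ) by omega, axialKernel_neg]
  exact_mod_cast axialKernel_natCast (i + 1)

lemma sum_range_succ_axialKernel (hlam : 1 < lam) (n : ℕ) :
    ∑ i ∈ range (n + 1), axialKernel lam i = hzeta lam 1 - hzeta lam (n + 1) := by
  rw [sum_range_succ', hzeta_eq_sum_range_add hlam 1 n, Nat.cast_zero,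
    axialKernel_zero (by linarith), add_zero, add_comm 1 n, add_sub_cancel_right]
  refine sum_congr rfl fun i _ => ?_
  exact_mod_cast axialKernel_natCast (i + 1)

lemma sum_range_axialKernel_sub (hlam : 1 < lam) {j n : ℕ} (hjn : j < n) :
    ∑ i ∈ range n, axialKernel lam (i - j) =
      2 * hzeta lam 1 - hzeta lam (j + 1) - hzeta lam (n - j) := by
  obtain ⟨m, rfl⟩ : ∃ m, n = j + (m + 1) := ⟨n - j - 1, by omega⟩
  rw [sum_range_add, sum_range_axialKernel_sub_self hlam, Nat.add_sub_cancel_left]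
  simp only [Nat.cast_add, add_sub_cancel_left]
  rw [sum_range_succ_axialKernel hlam]
  ring

lemma sum_squareP_biAxialWeight (hlam : 1 < lam) {j l : ℕ} (hjl : j < l) :
    ∑ y ∈ squareP l, biAxialWeight lam ((j : ℤ), (l : ℤ)) y =
      hzeta lam 1 - hzeta lam (l + 1) := by
  rw [squareP, sum_product, sum_eq_single (j : ℤ), sum_Ico_zero_intCast,
    ← sum_range_axialKernel_sub_self hlam]
  · refine sum_congr rfl fun i hi => ?_
    have : (i : ℤ) ≠ l := by have := mem_range.mp hi; omega
    simp [biAxialWeight_eq (by linarith : lam ≠ 0), this]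
  · intro p _ hp
    refine sum_eq_zero fun q hq => ?_
    have : q ≠ l := by have := (mem_Ico.mp hq).2; omega
    simp [biAxialWeight_eq (by linarith : lam ≠ 0), hp, this]
  · intro h
    exact absurd (mem_Ico.mpr ⟨by omega, by omega⟩) h

lemma sum_segment_biAxialWeight (hlam : 1 < lam) {j k : ℕ} (b : ℤ) (hjk : j < k) :
    ∑ y ∈ Ico (0 : ℤ) k ×ˢ {b}, biAxialWeight lam ((j : ℤ), b) y =
      2 * hzeta lam 1 - hzeta lam (j + 1) - hzeta lam (k - j) := by
  rw [sum_product, sum_Ico_zero_intCast, ← sum_range_axialKernel_sub hlam hjk]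
  simp [biAxialWeight_eq (by linarith : lam ≠ 0), axialKernel_zero (by linarith : lam ≠ 0)]

end

theorem stmt_14_general (lam : ℝ) (hlam : 1 < lam) (l k : ℕ)
    (hk : k ≤ l - 1) :
    nonlocalPer lam (squareProtP l k) - nonlocalPer lam (squareP l) =
      2 * k * hzeta lam (l + 1) + 2 * ∑ i ∈ Finset.Icc 1 k, hzeta lam i := by
  have hdisj : Disjoint (squareP l) (Ico (0 : ℤ) k ×ˢ {(l : ℤ)}) :=
    disjoint_left.mpr fun y hP hS => by
      simp only [squareP, mem_product, mem_Ico, mem_singleton] at hP hS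
      omega
  rw [squareProtP, nonlocalPer_union_sub hlam hdisj, sum_product, sum_Ico_zero_intCast]
  simp only [sum_singleton]
  have hterm : ∀ j ∈ range k,
      4 * hzeta lam 1 - 2 * ∑ y ∈ squareP l, biAxialWeight lam ((j : ℤ), (l : ℤ)) y -
        ∑ y ∈ Ico (0 : ℤ) k ×ˢ {(l : ℤ)}, biAxialWeight lam ((j : ℤ), (l : ℤ)) y =
      2 * hzeta lam (l + 1) + hzeta lam (j + 1) + hzeta lam (k - j) := fun j hj => by
    have hjk := mem_range.mp hj
    rw [sum_squareP_biAxialWeight hlam (by omega), sum_segment_biAxialWeight hlam _ hjk]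
    ring
  rw [sum_congr rfl hterm, sum_add_distrib, sum_add_distrib, sum_const, card_range,
    sum_range_add_one_eq_sum_Icc (hzeta lam), sum_range_sub_eq_sum_Icc (hzeta lam), nsmul_eq_mul]
  ring

theorem stmt_14 (lam : ℝ) (hlam : 1 < lam) (l k : ℕ)
    (hl : 2 ≤ l) (hk1 : 1 ≤ k) (hk : k ≤ l - 1) :
    nonlocalPer lam (squareProtP l k) - nonlocalPer lam (squareP l) =
      2 * k * hzeta lam (l + 1) + 2 * ∑ i ∈ Finset.Icc 1 k, hzeta lam i :=
  stmt_14_general lam hlam l k hk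
end
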